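/- Let 𝒜 ⊆ 2^[n] be a union-closed family with ∅ ∈ 𝒜 and U(𝒜) = [n], and let c_1, …, c_n be nonnegative integers with c_1 + ⋯ + c_n ≥ 1. If every union-closed family ℬ ⊆ 2^[n] satisfying {A ∪ S : A ∈ 𝒜, S ∈ ℬ} ⊆ ℬ obeys Σ_{S ∈ ℬ} ( Σ_{i ∈ S} c_i − Σ_{i ∈ [n]\S} c_i ) ≥ 0, then 𝒜 is a Frankl-Complete family. -/

import Mathlib

/-- A family of sets is union-closed. -/
def UC (F : Finset (Finset ℕ)) : Prop := ∀ A ∈ F, ∀ B ∈ F, A ∪ B ∈ F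

/-- `famU F` is the union `U(F)` of all members of the family `F`. -/
def famU (F : Finset (Finset ℕ)) : Finset ℕ := F.sup id

/-- `memFam F i` is the subfamily `F_i` of sets in `F` containing `i`. -/
def memFam (F : Finset (Finset ℕ)) (i : ℕ) : Finset (Finset ℕ) :=
  F.filter (fun S => i ∈ S)

/-- `A` is Frankl-Complete: every union-closed family containing `A` has an
element of `U(A)` belonging to at least half of its sets. -/
def FC (A : Finset (Finset ℕ)) : Prop :=
  ∀ F : Finset (Finset ℕ), UC F → A ⊆ F →
    ∃ i ∈ famU A, 2 * (memFam F i).card ≥ F.card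

/-- `uplus A B = {a ∪ b : a ∈ A, b ∈ B}`. -/
def uplus (A B : Finset (Finset ℕ)) : Finset (Finset ℕ) :=
  (A ×ˢ B).image (fun p => p.1 ∪ p.2)

/-!
Give a set `S` the signed weight `∑_{i ∈ [n]} ±c_i`, with sign `+` iff `i ∈ S`. Double counting
shows that the total signed weight of a family `F` is `∑_i c_i (2|F_i| - |F|)`, so if every
`i ∈ [n]` lay in fewer than half of the sets of `F`, the total would be at most `-∑ c_i < 0`.
On the other hand, grouping the sets of a union-closed `F ⊇ 𝒜` by their part `T` outside `[n]`,
the traces `{S ∩ [n] : S ∈ F, S \ [n] = T}` form a family `ℬ` as in the hypothesis, so each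
group has nonnegative total weight.
-/

open Finset

def traceFiber (F : Finset (Finset ℕ)) (N T : Finset ℕ) : Finset (Finset ℕ) :=
  N.powerset.filter (fun x => x ∪ T ∈ F)

section traceFiber

variable {F : Finset (Finset ℕ)} {N T : Finset ℕ}

theorem mem_traceFiber {x : Finset ℕ} : x ∈ traceFiber F N T ↔ x ⊆ N ∧ x ∪ T ∈ F := by
  rw [traceFiber, mem_filter, mem_powerset]

theorem traceFiber_subset_powerset : traceFiber F N T ⊆ N.powerset :=
  filter_subset _ _

theorem UC.traceFiber (hF : UC F) : UC (traceFiber F N T) := by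
  intro x hx y hy
  rw [mem_traceFiber] at hx hy ⊢
  refine ⟨union_subset hx.1 hy.1, ?_⟩
  rw [union_union_distrib_right]
  exact hF _ hx.2 _ hy.2

theorem uplus_traceFiber_subset {A : Finset (Finset ℕ)} (hF : UC F) (hAF : A ⊆ F)
    (hAN : ∀ a ∈ A, a ⊆ N) : uplus A (traceFiber F N T) ⊆ traceFiber F N T := by
  intro y hy
  obtain ⟨⟨a, x⟩, hax, rfl⟩ := mem_image.mp hy
  obtain ⟨ha, hx⟩ := mem_product.mp hax
  rw [mem_traceFiber] at hx ⊢
  refine ⟨union_subset (hAN a ha) hx.1, ?_⟩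
  rw [union_assoc]
  exact hF _ (hAF ha) _ hx.2

end traceFiber

theorem sum_eq_sum_sum_traceFiber {M : Type*} [AddCommMonoid M] (F : Finset (Finset ℕ))
    (N : Finset ℕ) (f : Finset ℕ → M) :
    ∑ S ∈ F, f S = ∑ T ∈ F.image (· \ N), ∑ x ∈ traceFiber F N T, f (x ∪ T) := by
  rw [← sum_fiberwise_of_maps_to (fun S hS => mem_image_of_mem (· \ N) hS)]
  refine sum_congr rfl fun T hT => ?_
  have hTN : Disjoint T N := by
    obtain ⟨S₀, -, rfl⟩ := mem_image.mp hT
    exact sdiff_disjoint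
  have hsplit : ∀ S ∈ F.filter (· \ N = T), S ∩ N ∪ T = S := by
    rintro S hS
    rw [← (mem_filter.mp hS).2, union_comm, sdiff_union_inter]
  refine sum_nbij' (· ∩ N) (· ∪ T) (fun S hS => ?_) (fun x hx => ?_) hsplit (fun x hx => ?_)
    (fun S hS => by rw [hsplit S hS])
  · rw [mem_traceFiber, hsplit S hS]
    exact ⟨inter_subset_right, (mem_filter.mp hS).1⟩
  · rw [mem_traceFiber] at hx
    rw [mem_filter, union_sdiff_distrib, sdiff_eq_empty_iff_subset.mpr hx.1,
      empty_union, hTN.sdiff_eq_left]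
    exact ⟨hx.2, rfl⟩
  · rw [mem_traceFiber] at hx
    rw [union_inter_distrib_right, inter_eq_left.mpr hx.1, disjoint_iff_inter_eq_empty.mp hTN,
      union_empty]

def signedWeight (N : Finset ℕ) (c : ℕ → ℤ) (S : Finset ℕ) : ℤ :=
  ∑ i ∈ N, if i ∈ S then c i else -c i

section signedWeight

variable {N : Finset ℕ} {c : ℕ → ℤ}

theorem signedWeight_of_subset {S : Finset ℕ} (hS : S ⊆ N) :
    signedWeight N c S = ∑ i ∈ S, c i - ∑ i ∈ N \ S, c i := by
  rw [signedWeight, sum_ite, sum_neg_distrib, filter_mem_eq_inter, inter_eq_right.mpr hS,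
    ← sdiff_eq_filter, sub_eq_add_neg]

theorem signedWeight_union_of_disjoint {x T : Finset ℕ} (hTN : Disjoint T N) :
    signedWeight N c (x ∪ T) = signedWeight N c x :=
  sum_congr rfl fun i hi => by
    simp only [mem_union, disjoint_right.mp hTN hi, or_false]

theorem sum_signedWeight_eq (F : Finset (Finset ℕ)) :
    ∑ S ∈ F, signedWeight N c S = ∑ i ∈ N, c i * (2 * #(memFam F i) - #F) := by
  simp only [signedWeight]
  rw [sum_comm]
  refine sum_congr rfl fun i _ => ?_
  have hcard := card_filter_add_card_filter_not (s := F) (fun S => i ∈ S)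
  rw [sum_ite, sum_const, sum_const, memFam, ← hcard]
  push_cast
  ring

end signedWeight

theorem sum_signedWeight_nonneg {A F : Finset (Finset ℕ)} {N : Finset ℕ} {c : ℕ → ℤ}
    (hF : UC F) (hAF : A ⊆ F) (hAN : ∀ a ∈ A, a ⊆ N)
    (h : ∀ B : Finset (Finset ℕ), B ⊆ N.powerset → UC B → uplus A B ⊆ B →
      0 ≤ ∑ S ∈ B, signedWeight N c S) :
    0 ≤ ∑ S ∈ F, signedWeight N c S := by
  rw [sum_eq_sum_sum_traceFiber F N]
  refine sum_nonneg fun T hT => ?_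
  obtain ⟨S₀, -, rfl⟩ := mem_image.mp hT
  rw [sum_congr rfl fun x _ => signedWeight_union_of_disjoint sdiff_disjoint]
  exact h _ traceFiber_subset_powerset hF.traceFiber (uplus_traceFiber_subset hF hAF hAN)

theorem exists_two_mul_card_memFam_ge {F : Finset (Finset ℕ)} {N : Finset ℕ} {c : ℕ → ℤ}
    (hc : ∀ i ∈ N, 0 ≤ c i) (hcsum : 1 ≤ ∑ i ∈ N, c i)
    (hF : 0 ≤ ∑ S ∈ F, signedWeight N c S) : ∃ i ∈ N, 2 * #(memFam F i) ≥ #F := by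
  by_contra! hlt
  have : ∑ S ∈ F, signedWeight N c S ≤ -∑ i ∈ N, c i := calc
    _ = ∑ i ∈ N, c i * (2 * #(memFam F i) - #F) := sum_signedWeight_eq F
    _ ≤ ∑ i ∈ N, c i * (-1) := sum_le_sum fun i hi =>
      mul_le_mul_of_nonneg_left (by have := hlt i hi; omega) (hc i hi)
    _ = -∑ i ∈ N, c i := by simp only [mul_neg_one, sum_neg_distrib]
  linarith

theorem fc_of_int_system_infeasible_general (n : ℕ) (A : Finset (Finset ℕ))
    (hU : famU A = Finset.Icc 1 n)
    (c : ℕ → ℤ) (hc : ∀ i ∈ Finset.Icc 1 n, 0 ≤ c i)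
    (hcsum : 1 ≤ ∑ i ∈ Finset.Icc 1 n, c i)
    (h : ∀ B : Finset (Finset ℕ), B ⊆ (Finset.Icc 1 n).powerset → UC B →
      uplus A B ⊆ B →
      0 ≤ ∑ S ∈ B, ((∑ i ∈ S, c i) - ∑ i ∈ Finset.Icc 1 n \ S, c i)) :
    FC A := by
  intro F hF hAF
  have hAN : ∀ a ∈ A, a ⊆ Icc 1 n := fun a ha => hU ▸ le_sup (f := id) ha
  have hweight : ∀ B : Finset (Finset ℕ), B ⊆ (Icc 1 n).powerset → UC B → uplus A B ⊆ B →
      0 ≤ ∑ S ∈ B, signedWeight (Icc 1 n) c S := fun B hB hBUC hAB => by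
    rw [sum_congr rfl fun S hS => signedWeight_of_subset (mem_powerset.mp (hB hS))]
    exact h B hB hBUC hAB
  obtain ⟨i, hi, hcard⟩ :=
    exists_two_mul_card_memFam_ge hc hcsum (sum_signedWeight_nonneg hF hAF hAN hweight)
  exact ⟨i, hU ▸ hi, hcard⟩

theorem fc_of_int_system_infeasible (n : ℕ) (A : Finset (Finset ℕ))
    (hsub : A ⊆ (Finset.Icc 1 n).powerset) (hUC : UC A) (hemp : ∅ ∈ A)
    (hU : famU A = Finset.Icc 1 n)
    (c : ℕ → ℤ) (hc : ∀ i ∈ Finset.Icc 1 n, 0 ≤ c i)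
    (hcsum : 1 ≤ ∑ i ∈ Finset.Icc 1 n, c i)
    (h : ∀ B : Finset (Finset ℕ), B ⊆ (Finset.Icc 1 n).powerset → UC B →
      uplus A B ⊆ B →
      0 ≤ ∑ S ∈ B, ((∑ i ∈ S, c i) - ∑ i ∈ Finset.Icc 1 n \ S, c i)) :
    FC A :=
  fc_of_int_system_infeasible_general n A hU c hc hcsum h
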